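/- Invariance of the attitude sublevel set: let J be a symmetric positive definite real 3×3 matrix with largest eigenvalue λ_max(J), and k_R, k_ω > 0. Let R, R_d : ℝ → M_3(ℝ) be differentiable with values in SO(3), and ω, ω_d : ℝ → ℝ^3 differentiable, satisfying R'(t) = R(t)[ω(t)]_×, R_d'(t) = R_d(t)[ω_d(t)]_×, and J e_ω'(t) = −k_R e_R(t) − k_ω e_ω(t), where e_R(t) = (1/2)(R_d(t)ᵀR(t) − R(t)ᵀR_d(t))∨ and e_ω(t) = ω(t) − R(t)ᵀR_d(t) ω_d(t). If the initial conditions satisfy Ψ(R(0), R_d(0)) < 2 and ‖e_ω(0)‖^2 < (2 k_R / λ_max(J)) (2 − Ψ(R(0), R_d(0))), then Ψ(R(t), R_d(t)) < 2 for all t ≥ 0. -/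

import Mathlib

open Real Matrix
open scoped RealInnerProductSpace

attribute [local instance] Matrix.normedAddCommGroup Matrix.normedSpace

/-- `SO(3)`: real 3×3 matrices `Q` with `Qᵀ Q = I` and `det Q = 1`. -/
def SO3 (Q : Matrix (Fin 3) (Fin 3) ℝ) : Prop :=
  Qᵀ * Q = 1 ∧ Q.det = 1

/-- The hat map `[x]_×`: the skew-symmetric matrix with `[x]_× y = x × y`. -/
noncomputable def hat (x : EuclideanSpace ℝ (Fin 3)) : Matrix (Fin 3) (Fin 3) ℝ :=
  !![0, -x 2, x 1; x 2, 0, -x 0; -x 1, x 0, 0]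

/-- The attitude error function `Ψ(R, R_d) = (1/2) tr(I − R_dᵀ R)`. -/
noncomputable def Psi (R Rd : Matrix (Fin 3) (Fin 3) ℝ) : ℝ :=
  (1 / 2 : ℝ) * (1 - Rdᵀ * R).trace

/-- The attitude error vector `e_R = (1/2) (R_dᵀ R − Rᵀ R_d)∨`, where `∨` is the
vee map from skew-symmetric matrices to `ℝ³`. -/
noncomputable def errVec (R Rd : Matrix (Fin 3) (Fin 3) ℝ) : EuclideanSpace ℝ (Fin 3) :=
  (1 / 2 : ℝ) • (WithLp.toLp 2 ![(Rdᵀ * R - Rᵀ * Rd) 2 1, (Rdᵀ * R - Rᵀ * Rd) 0 2,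
    (Rdᵀ * R - Rᵀ * Rd) 1 0] : EuclideanSpace ℝ (Fin 3))

/-- The angular velocity error `e_ω = ω − Rᵀ R_d ω_d`. -/
noncomputable def errOmega (R Rd : Matrix (Fin 3) (Fin 3) ℝ)
    (ω ωd : EuclideanSpace ℝ (Fin 3)) : EuclideanSpace ℝ (Fin 3) :=
  ω - (show EuclideanSpace ℝ (Fin 3) from WithLp.toLp 2 ((Rᵀ * Rd).mulVec ωd))

/-- A rotation matrix fixes the vee vector of its antisymmetric part. -/
lemma so3_fix (Q : Matrix (Fin 3) (Fin 3) ℝ) (h : Qᵀ * Q = 1) (hd : Q.det = 1) :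
    Q.mulVec ![Q 2 1 - Q 1 2, Q 0 2 - Q 2 0, Q 1 0 - Q 0 1]
      = ![Q 2 1 - Q 1 2, Q 0 2 - Q 2 0, Q 1 0 - Q 0 1] := by
  have hadj : Qᵀ = adjugate Q := by
    have h2 : Q * adjugate Q = 1 := by rw [Matrix.mul_adjugate, hd, one_smul]
    calc Qᵀ = Qᵀ * (Q * adjugate Q) := by rw [h2, mul_one]
    _ = (Qᵀ * Q) * adjugate Q := by rw [mul_assoc]
    _ = adjugate Q := by rw [h, one_mul]
  rw [adjugate_fin_three] at hadj
  have e12 : Q 2 1 = -(Q 0 0 * Q 1 2) + Q 0 2 * Q 1 0 := by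
    have := congrFun (congrFun hadj 1) 2; simpa using this
  have e21 : Q 1 2 = -(Q 0 0 * Q 2 1) + Q 0 1 * Q 2 0 := by
    have := congrFun (congrFun hadj 2) 1; simpa using this
  have e02 : Q 2 0 = Q 0 1 * Q 1 2 - Q 0 2 * Q 1 1 := by
    have := congrFun (congrFun hadj 0) 2; simpa using this
  have e20 : Q 0 2 = Q 1 0 * Q 2 1 - Q 1 1 * Q 2 0 := by
    have := congrFun (congrFun hadj 2) 0; simpa using this
  have e01 : Q 1 0 = -(Q 0 1 * Q 2 2) + Q 0 2 * Q 2 1 := by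
    have := congrFun (congrFun hadj 0) 1; simpa using this
  have e10 : Q 0 1 = -(Q 1 0 * Q 2 2) + Q 1 2 * Q 2 0 := by
    have := congrFun (congrFun hadj 1) 0; simpa using this
  funext i
  fin_cases i <;>
    simp [Matrix.mulVec, dotProduct, Fin.sum_univ_three] <;> first
    | linear_combination e12 - e21 | linear_combination e21 - e12
    | linear_combination e20 - e02 | linear_combination e02 - e20
    | linear_combination e01 - e10 | linear_combination e10 - e01

lemma entry_hasDerivAt {f : ℝ → Matrix (Fin 3) (Fin 3) ℝ} {f' : Matrix (Fin 3) (Fin 3) ℝ} {t : ℝ}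
    (hf : HasDerivAt f f' t) (i j : Fin 3) : HasDerivAt (fun s => f s i j) (f' i j) t := by
  exact (LinearMap.toContinuousLinearMap
    { toFun := fun M : Matrix (Fin 3) (Fin 3) ℝ => M i j,
      map_add' := fun a b => rfl,
      map_smul' := fun c a => by simp [Matrix.smul_apply] }).hasFDerivAt.comp_hasDerivAt t hf

lemma euc_comp_differentiable {f : ℝ → EuclideanSpace ℝ (Fin 3)}
    (h : Differentiable ℝ f) (i : Fin 3) : Differentiable ℝ (fun s => f s i) := by
  have := (EuclideanSpace.proj (𝕜 := ℝ) i).differentiable.comp h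
  exact this

lemma euc_differentiable {f : ℝ → EuclideanSpace ℝ (Fin 3)}
    (h : ∀ i, Differentiable ℝ fun s => f s i) : Differentiable ℝ f := by
  have h1 : Differentiable ℝ (fun s => (EuclideanSpace.equiv (Fin 3) ℝ) (f s)) :=
    differentiable_pi.2 h
  have := ((EuclideanSpace.equiv (Fin 3) ℝ).symm.differentiable.comp h1)
  exact this

lemma rayleigh_bound (J : Matrix (Fin 3) (Fin 3) ℝ) (hJ : J.IsHermitian)
    (x : EuclideanSpace ℝ (Fin 3)) :
    ⟪x, (show EuclideanSpace ℝ (Fin 3) from WithLp.toLp 2 (J.mulVec x))⟫ ≤ (⨆ i, hJ.eigenvalues i) * ‖x‖ ^ 2 := by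
  classical
  set b := hJ.eigenvectorBasis with hb
  have hsym : ∀ (u v : EuclideanSpace ℝ (Fin 3)),
      ⟪(show EuclideanSpace ℝ (Fin 3) from WithLp.toLp 2 (J.mulVec u)), v⟫
        = ⟪u, (show EuclideanSpace ℝ (Fin 3) from WithLp.toLp 2 (J.mulVec v))⟫ := by
    have h := (Matrix.isHermitian_iff_isSymmetric.1 hJ)
    intro u v
    simpa [Matrix.toEuclideanLin_apply] using h u v
  have hJb : ∀ i, (show EuclideanSpace ℝ (Fin 3) from WithLp.toLp 2 (J.mulVec (b i))) = hJ.eigenvalues i • b i := by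
    intro i
    have h := hJ.mulVec_eigenvectorBasis i
    ext j
    exact congrFun h j
  have key : ⟪x, (show EuclideanSpace ℝ (Fin 3) from WithLp.toLp 2 (J.mulVec x))⟫
      = ∑ i, hJ.eigenvalues i * (⟪b i, x⟫ * ⟪b i, x⟫) := by
    rw [← OrthonormalBasis.sum_inner_mul_inner b x (show EuclideanSpace ℝ (Fin 3) from WithLp.toLp 2 (J.mulVec x))]
    congr 1; funext i
    rw [← hsym (b i) x, hJb i]
    rw [real_inner_smul_left]
    have : ⟪x, b i⟫ = ⟪b i, x⟫ := real_inner_comm _ _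
    rw [this]; ring
  rw [key]
  have hpar : ∑ i, ⟪b i, x⟫ * ⟪b i, x⟫ = ‖x‖ ^ 2 := by
    have := OrthonormalBasis.sum_inner_mul_inner b x x
    rw [real_inner_self_eq_norm_sq] at this
    rw [← this]; congr 1; funext i; rw [real_inner_comm x (b i)]
  have hsup : ∀ i, hJ.eigenvalues i ≤ ⨆ j, hJ.eigenvalues j := fun i =>
    le_ciSup (Set.Finite.bddAbove (Set.finite_range _)) i
  calc ∑ i, hJ.eigenvalues i * (⟪b i, x⟫ * ⟪b i, x⟫)
      ≤ ∑ i, (⨆ j, hJ.eigenvalues j) * (⟪b i, x⟫ * ⟪b i, x⟫) := by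
        apply Finset.sum_le_sum
        intro i _
        exact mul_le_mul_of_nonneg_right (hsup i) (mul_self_nonneg _)
    _ = (⨆ j, hJ.eigenvalues j) * ‖x‖ ^ 2 := by rw [← Finset.mul_sum, hpar]

/-- The key algebraic identity: `⟪e_R, e_ω⟫` equals the derivative of `Ψ`. -/
lemma psi_inner_eq (A B : Matrix (Fin 3) (Fin 3) ℝ) (w wd : EuclideanSpace ℝ (Fin 3))
    (hA1 : Aᵀ * A = 1) (hA2 : A.det = 1) (hB1 : Bᵀ * B = 1) (hB2 : B.det = 1) :
    (⟪errVec A B, errOmega A B w wd⟫ : ℝ)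
      = 1/2 * (0 - ∑ i : Fin 3, ∑ j : Fin 3,
          ((B * hat wd) j i * A j i + B j i * (A * hat w) j i)) := by
  have hBB : B * Bᵀ = 1 := mul_eq_one_comm.mp hB1
  have hQ1 : (Bᵀ * A)ᵀ * (Bᵀ * A) = 1 := by
    calc (Bᵀ * A)ᵀ * (Bᵀ * A) = Aᵀ * (B * (Bᵀ * A)) := by
          rw [Matrix.transpose_mul, Matrix.transpose_transpose, Matrix.mul_assoc]
    _ = Aᵀ * ((B * Bᵀ) * A) := by rw [Matrix.mul_assoc]
    _ = Aᵀ * A := by rw [hBB, Matrix.one_mul]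
    _ = 1 := hA1
  have hQd : (Bᵀ * A).det = 1 := by
    rw [Matrix.det_mul, Matrix.det_transpose, hB2, hA2, one_mul]
  have hfix := so3_fix (Bᵀ * A) hQ1 hQd
  have h0 := congrFun hfix 0
  have h1 := congrFun hfix 1
  have h2 := congrFun hfix 2
  simp only [Matrix.mulVec, dotProduct, Fin.sum_univ_three, Matrix.mul_apply,
    Matrix.transpose_apply, Matrix.cons_val_zero, Matrix.cons_val_one, Matrix.head_cons,
    Matrix.cons_val_two, Matrix.tail_cons] at h0 h1 h2
  simp [errVec, errOmega, PiLp.inner_apply, RCLike.inner_apply, Fin.sum_univ_three,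
    Matrix.mulVec, dotProduct, Matrix.mul_apply, Matrix.transpose_apply, hat,
    Matrix.sub_apply, PiLp.sub_apply, PiLp.smul_apply, smul_eq_mul]
  linear_combination (-(wd 0) / 2) * h0 + (-(wd 1) / 2) * h1 + (-(wd 2) / 2) * h2

/-- **Invariance of the attitude sublevel set**: under the closed-loop rotational error
dynamics, if `Ψ(R(0), R_d(0)) < 2` and
`‖e_ω(0)‖² < (2 k_R / λ_max(J)) (2 − Ψ(R(0), R_d(0)))`, then `Ψ(R(t), R_d(t)) < 2`
for all `t ≥ 0`. -/
theorem attitude_sublevel_invariant (J : Matrix (Fin 3) (Fin 3) ℝ) (hJ : J.PosDef)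
    (kR kω : ℝ) (hkR : 0 < kR) (hkω : 0 < kω)
    (R Rd : ℝ → Matrix (Fin 3) (Fin 3) ℝ) (ω ωd : ℝ → EuclideanSpace ℝ (Fin 3))
    (hRso : ∀ t, SO3 (R t)) (hRdso : ∀ t, SO3 (Rd t))
    (hR : ∀ t, HasDerivAt R (R t * hat (ω t)) t)
    (hRd : ∀ t, HasDerivAt Rd (Rd t * hat (ωd t)) t)
    (hω : Differentiable ℝ ω) (hωd : Differentiable ℝ ωd)
    (hdyn : ∀ t,
      (show EuclideanSpace ℝ (Fin 3) from
        WithLp.toLp 2 (J.mulVec (WithLp.ofLp (deriv (fun s => errOmega (R s) (Rd s) (ω s) (ωd s)) t))))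
      = -(kR • errVec (R t) (Rd t)) - kω • errOmega (R t) (Rd t) (ω t) (ωd t))
    (hinit₁ : Psi (R 0) (Rd 0) < 2)
    (hinit₂ : ‖errOmega (R 0) (Rd 0) (ω 0) (ωd 0)‖ ^ 2
      < 2 * kR / (⨆ i, hJ.1.eigenvalues i) * (2 - Psi (R 0) (Rd 0))) :
    ∀ t ≥ (0 : ℝ), Psi (R t) (Rd t) < 2 := by
  classical
  set e : ℝ → EuclideanSpace ℝ (Fin 3) := fun s => errOmega (R s) (Rd s) (ω s) (ωd s) with he_def
  set eR : ℝ → EuclideanSpace ℝ (Fin 3) := fun s => errVec (R s) (Rd s) with heR_def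
  set ψ : ℝ → ℝ := fun s => Psi (R s) (Rd s) with hψ_def
  -- derivative of Ψ along the flow
  have hψ : ∀ t, HasDerivAt ψ (⟪eR t, e t⟫) t := by
    intro t
    have heq : ψ = fun s =>
        (1/2 : ℝ) * (3 - ∑ i : Fin 3, ∑ j : Fin 3, Rd s j i * R s j i) := by
      funext s
      show Psi (R s) (Rd s) = _
      simp only [Psi, Matrix.trace, Matrix.diag, Matrix.sub_apply, Matrix.one_apply,
        Matrix.mul_apply, Matrix.transpose_apply, Fin.sum_univ_three]
      norm_num
      ring
    rw [heq]
    have hsum : HasDerivAt (fun s => ∑ i : Fin 3, ∑ j : Fin 3, Rd s j i * R s j i)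
        (∑ i : Fin 3, ∑ j : Fin 3, ((Rd t * hat (ωd t)) j i * R t j i
          + Rd t j i * (R t * hat (ω t)) j i)) t := by
      apply HasDerivAt.fun_sum; intro i _; apply HasDerivAt.fun_sum; intro j _
      exact (entry_hasDerivAt (hRd t) j i).mul (entry_hasDerivAt (hR t) j i)
    have h2 := ((hasDerivAt_const t (3:ℝ)).sub hsum).const_mul (1/2 : ℝ)
    refine h2.congr_deriv ?_
    obtain ⟨hA1, hA2⟩ := hRso t
    obtain ⟨hB1, hB2⟩ := hRdso t
    exact (psi_inner_eq (R t) (Rd t) (ω t) (ωd t) hA1 hA2 hB1 hB2).symm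
  -- differentiability of the velocity error
  have hωi : ∀ i, Differentiable ℝ (fun s => ω s i) := euc_comp_differentiable hω
  have hωdi : ∀ i, Differentiable ℝ (fun s => ωd s i) := euc_comp_differentiable hωd
  have hentryR : ∀ (k i : Fin 3), Differentiable ℝ (fun s => R s k i) :=
    fun k i t => (entry_hasDerivAt (hR t) k i).differentiableAt
  have hentryRd : ∀ (k i : Fin 3), Differentiable ℝ (fun s => Rd s k i) :=
    fun k i t => (entry_hasDerivAt (hRd t) k i).differentiableAt
  have hediff : Differentiable ℝ e := by
    apply euc_differentiable
    intro i
    have hcomp : (fun s => e s i)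
        = fun s => ω s i - ∑ j : Fin 3, (∑ k : Fin 3, R s k i * Rd s k j) * ωd s j := by
      funext s
      show errOmega (R s) (Rd s) (ω s) (ωd s) i = _
      simp [errOmega, PiLp.sub_apply, Matrix.mulVec, dotProduct, Matrix.mul_apply,
        Matrix.transpose_apply]
    rw [hcomp]
    apply Differentiable.sub (hωi i)
    apply Differentiable.fun_sum
    intro j _
    exact (Differentiable.fun_sum fun k _ => (hentryR k i).mul (hentryRd k j)).mul (hωdi j)
  have he : ∀ t, HasDerivAt e (deriv e t) t := fun t => (hediff t).hasDerivAt
  -- the multiplication-by-J continuous linear map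
  set Jmv : EuclideanSpace ℝ (Fin 3) →L[ℝ] EuclideanSpace ℝ (Fin 3) :=
    LinearMap.toContinuousLinearMap
      { toFun := fun x => (show EuclideanSpace ℝ (Fin 3) from WithLp.toLp 2 (J.mulVec x)),
        map_add' := fun x y => by ext i; simp [Matrix.mulVec_add],
        map_smul' := fun c x => by ext i; simp [Matrix.mulVec_smul] }
    with hJmv_def
  have hsym : ∀ u v : EuclideanSpace ℝ (Fin 3), ⟪Jmv u, v⟫ = ⟪u, Jmv v⟫ := by
    have h := (Matrix.isHermitian_iff_isSymmetric.1 hJ.1)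
    intro u v
    have h2 := h u v
    simp only [Matrix.toEuclideanLin_apply] at h2
    exact h2
  -- Lyapunov function and its derivative
  set V : ℝ → ℝ := fun s => 1/2 * ⟪e s, Jmv (e s)⟫ + kR * ψ s with hV_def
  have hV : ∀ t, HasDerivAt V (-kω * ‖e t‖^2) t := by
    intro t
    have hJe : HasDerivAt (fun s => Jmv (e s)) (Jmv (deriv e t)) t :=
      Jmv.hasFDerivAt.comp_hasDerivAt t (he t)
    have hinner := HasDerivAt.inner ℝ (he t) hJe
    have hd := (hinner.const_mul (1/2 : ℝ)).add ((hψ t).const_mul kR)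
    refine hd.congr_deriv ?_
    have hswap : ⟪deriv e t, Jmv (e t)⟫ = ⟪e t, Jmv (deriv e t)⟫ := by
      rw [← hsym (deriv e t) (e t)]
      exact real_inner_comm _ _
    set dd : EuclideanSpace ℝ (Fin 3) := deriv e t with hdd
    have hde : deriv e t = dd := rfl
    have hdyn' : Jmv dd = -(kR • eR t) - kω • e t := by
      have h := hdyn t
      rw [hde] at h
      exact h
    rw [hswap, hdyn']
    simp only [inner_sub_right, inner_neg_right, inner_smul_right, real_inner_self_eq_norm_sq]
    rw [real_inner_comm (eR t) (e t)]
    ring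
  -- V is nonincreasing on [0, ∞)
  have hVdiff : Differentiable ℝ V := fun t => (hV t).differentiableAt
  have hanti : AntitoneOn V (Set.Ici (0:ℝ)) := by
    apply antitoneOn_of_deriv_nonpos (convex_Ici 0) hVdiff.continuous.continuousOn
      hVdiff.differentiableOn
    intro x _
    rw [(hV x).deriv]
    have h1 : (0:ℝ) ≤ kω * ‖e x‖^2 := by positivity
    linarith
  -- eigenvalue bounds
  have hlampos : 0 < ⨆ i, hJ.1.eigenvalues i :=
    lt_of_lt_of_le (hJ.eigenvalues_pos 0)
      (le_ciSup (Set.Finite.bddAbove (Set.finite_range _)) 0)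
  have hqnn : ∀ s, (0:ℝ) ≤ ⟪e s, Jmv (e s)⟫ := by
    intro s
    have h := hJ.posSemidef.dotProduct_mulVec_nonneg (e s)
    rw [EuclideanSpace.inner_eq_star_dotProduct, dotProduct_comm]
    exact h
  have hray : ⟪e 0, Jmv (e 0)⟫ ≤ (⨆ i, hJ.1.eigenvalues i) * ‖e 0‖^2 :=
    rayleigh_bound J hJ.1 (e 0)
  -- conclusion
  intro t ht
  have hVt : V t ≤ V 0 := hanti Set.self_mem_Ici (Set.mem_Ici.2 ht) ht
  have hψt : kR * ψ t ≤ V t := by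
    have h := hqnn t
    simp only [hV_def]
    linarith
  have h2' : ‖e 0‖^2 < 2 * kR / (⨆ i, hJ.1.eigenvalues i) * (2 - ψ 0) := hinit₂
  have hstep : (⨆ i, hJ.1.eigenvalues i) * ‖e 0‖^2
      < (⨆ i, hJ.1.eigenvalues i) * (2 * kR / (⨆ i, hJ.1.eigenvalues i) * (2 - ψ 0)) :=
    (mul_lt_mul_iff_right₀ hlampos).2 h2'
  have hcanc : (⨆ i, hJ.1.eigenvalues i) * (2 * kR / (⨆ i, hJ.1.eigenvalues i) * (2 - ψ 0))
      = 2 * kR * (2 - ψ 0) := by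
    field_simp
  rw [hcanc] at hstep
  have hV0 : V 0 < 2 * kR := by
    calc V 0 = 1/2 * ⟪e 0, Jmv (e 0)⟫ + kR * ψ 0 := rfl
    _ ≤ 1/2 * ((⨆ i, hJ.1.eigenvalues i) * ‖e 0‖^2) + kR * ψ 0 := by linarith [hray]
    _ < 1/2 * (2 * kR * (2 - ψ 0)) + kR * ψ 0 := by linarith [hstep]
    _ = 2 * kR := by ring
  have final : kR * ψ t < 2 * kR := lt_of_le_of_lt (le_trans hψt hVt) hV0
  show ψ t < 2
  nlinarith
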